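/- (Bound on the number of damped iterations) Let P : ℝⁿ → ℝᵐ be continuously differentiable, u⁰ ∈ ℝⁿ, s = ‖P(u⁰)‖_∞ > 0, and let μ, L > 0 and ρ > 0 satisfy: ‖P'(u)ᵀh‖_∞ ≥ μ‖h‖₁ for all h ∈ ℝᵐ and all u ∈ B_ρ = {u : ‖u − u⁰‖₁ ≤ ρ}; ‖(P'(a) − P'(b))v‖_∞ ≤ L‖a−b‖₁‖v‖₁ for all a, b ∈ B_ρ, v ∈ ℝⁿ; and ρ ≥ (μ/L)·(k_max + 2H₀(v̄/2)), where k_max = max{0, ⌈2Ls/μ²⌉ − 2} and v̄ = Ls/μ² − k_max/2. Then for every damped sparse-Newton sequence (uᵏ) from u⁰, the step-size γ_k = min{1, μ²/(L‖P(uᵏ)‖_∞)} equals 1 for all k ≥ k_max; i.e., the method makes at most k_max damped iterations, after which it performs pure Newton iterations. -/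

import Mathlib

open Filter Topology

/-- The ℓ1-norm on `ℝ^d`: `‖x‖₁ = Σᵢ |xᵢ|`. -/
noncomputable def l1Norm {d : ℕ} (x : Fin d → ℝ) : ℝ := ∑ i, |x i|

/-- The ℓ∞-norm on `ℝ^d`: `‖x‖_∞ = maxᵢ |xᵢ|`. -/
noncomputable def linfNorm {d : ℕ} (x : Fin d → ℝ) : ℝ := ⨆ i, |x i|

/-- `H₀(δ) = Σ_{ℓ=0}^∞ δ^(2^ℓ)`. -/
noncomputable def H0 (δ : ℝ) : ℝ := ∑' ℓ : ℕ, δ ^ (2 ^ ℓ)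

/-- The transpose of a continuous linear map `A : ℝⁿ → ℝᵐ` applied to `h ∈ ℝᵐ`:
`(Aᵀ h)ᵢ = Σⱼ Aⱼᵢ hⱼ` where `Aⱼᵢ = (A eᵢ)ⱼ`. -/
noncomputable def transposeApply {n m : ℕ} (A : (Fin n → ℝ) →L[ℝ] (Fin m → ℝ))
    (h : Fin m → ℝ) : Fin n → ℝ :=
  fun i => ∑ j, A (Pi.single i 1) j * h j

/-! Write `g_k = L‖P(uᵏ)‖_∞ / μ²`. By Hahn–Banach, the bound `‖P'(u)ᵀh‖_∞ ≥ μ‖h‖₁` yields a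
solution `v` of `P'(u)v = P(u)` with `‖v‖₁ ≤ ‖P(u)‖_∞ / μ`, so the ℓ1-minimal Newton direction
obeys the same bound and the damped step has length at most `(μ/L)·min(g_k, 1)`. As long as the
iterates stay in `B_ρ`, the quadratic Taylor estimate gives
`g_{k+1} ≤ g_k - min(g_k, 1) + min(g_k, 1)² / 2`. This recursion is majorized by
`φ_k = g_0 - k/2` for `k < k_max` and `φ_k = 2(v̄/2)^(2^(k - k_max))` afterwards, whose total
step length `(μ/L)·Σ min(φ_k, 1) ≤ (μ/L)(k_max + 2H₀(v̄/2)) ≤ ρ` keeps all iterates in `B_ρ`.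
Since `φ_k ≤ 1` for `k ≥ k_max`, the step size is `1` from then on. -/

section Norms

variable {d : ℕ}

lemma l1Norm_eq_norm_toLp (x : Fin d → ℝ) : l1Norm x = ‖WithLp.toLp 1 x‖ := by
  simp [PiLp.norm_eq_of_L1, l1Norm]

lemma linfNorm_eq_norm (x : Fin d → ℝ) : linfNorm x = ‖x‖ :=
  le_antisymm (Real.iSup_le (norm_le_pi_norm x) (norm_nonneg x))
    ((pi_norm_le_iff_of_nonneg (Real.iSup_nonneg fun _ => abs_nonneg _)).2
      fun i => le_ciSup (f := fun j => |x j|) (Finite.bddAbove_range _) i)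

lemma l1Norm_nonneg (x : Fin d → ℝ) : 0 ≤ l1Norm x := by
  rw [l1Norm_eq_norm_toLp]; positivity

lemma linfNorm_nonneg (x : Fin d → ℝ) : 0 ≤ linfNorm x := by
  rw [linfNorm_eq_norm]; positivity

lemma linfNorm_pos {y : Fin d → ℝ} (hy : y ≠ 0) : 0 < linfNorm y := by
  rwa [linfNorm_eq_norm, norm_pos_iff]

lemma l1Norm_sub_le (x y : Fin d → ℝ) : l1Norm (x - y) ≤ l1Norm x + l1Norm y := by
  simpa only [l1Norm_eq_norm_toLp, WithLp.toLp_sub] using norm_sub_le _ _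

lemma l1Norm_smul (c : ℝ) (x : Fin d → ℝ) : l1Norm (c • x) = |c| * l1Norm x := by
  simp only [l1Norm_eq_norm_toLp, WithLp.toLp_smul, norm_smul, Real.norm_eq_abs]

lemma l1Norm_neg (x : Fin d → ℝ) : l1Norm (-x) = l1Norm x := by
  simp only [l1Norm_eq_norm_toLp, WithLp.toLp_neg, norm_neg]

lemma linfNorm_add_le (x y : Fin d → ℝ) : linfNorm (x + y) ≤ linfNorm x + linfNorm y := by
  simpa only [linfNorm_eq_norm] using norm_add_le x y

lemma linfNorm_smul (c : ℝ) (x : Fin d → ℝ) : linfNorm (c • x) = |c| * linfNorm x := by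
  simp only [linfNorm_eq_norm, norm_smul, Real.norm_eq_abs]

lemma l1Ball_eq_preimage (c : Fin d → ℝ) (ρ : ℝ) :
    {v | l1Norm (v - c) ≤ ρ} = WithLp.toLp 1 ⁻¹' Metric.closedBall (WithLp.toLp 1 c) ρ := by
  ext v; simp [l1Norm_eq_norm_toLp, dist_eq_norm]

lemma convex_l1Ball (c : Fin d → ℝ) (ρ : ℝ) : Convex ℝ {v | l1Norm (v - c) ≤ ρ} := by
  rw [l1Ball_eq_preimage]
  exact (convex_closedBall _ _).linear_preimage
    (WithLp.linearEquiv 1 ℝ (Fin d → ℝ)).symm.toLinearMap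

lemma isCompact_l1Ball (c : Fin d → ℝ) (ρ : ℝ) : IsCompact {v | l1Norm (v - c) ≤ ρ} := by
  rw [l1Ball_eq_preimage]
  exact (PiLp.continuousLinearEquiv 1 ℝ _).symm.toHomeomorph.isCompact_preimage.2
    (isCompact_closedBall _ _)

lemma dotProduct_le_l1Norm_mul_linfNorm (h y : Fin d → ℝ) : h ⬝ᵥ y ≤ l1Norm h * linfNorm y := by
  rw [l1Norm, Finset.sum_mul, linfNorm_eq_norm]
  refine Finset.sum_le_sum fun j _ => (le_abs_self _).trans ?_
  rw [abs_mul]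
  exact mul_le_mul_of_nonneg_left (norm_le_pi_norm y j) (abs_nonneg _)

lemma exists_l1Norm_le_mul_linfNorm_le_dotProduct (y : Fin d → ℝ) {r : ℝ} (hr : 0 ≤ r) :
    ∃ v, l1Norm v ≤ r ∧ r * linfNorm y ≤ y ⬝ᵥ v := by
  rcases isEmpty_or_nonempty (Fin d) with hd | hd
  · exact ⟨0, by simp [l1Norm, hr], by simp [linfNorm]⟩
  obtain ⟨i, -, hi⟩ := Finset.exists_max_image Finset.univ (fun j => |y j|) Finset.univ_nonempty
  refine ⟨Pi.single i (r * SignType.sign (y i)), ?_, ?_⟩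
  · rw [l1Norm, Finset.sum_eq_single i (fun j _ hj => by simp [hj]) (by simp)]
    cases SignType.sign (y i) <;> simp [abs_of_nonneg hr, hr]
  · rw [dotProduct_single, mul_left_comm, self_mul_sign]
    exact mul_le_mul_of_nonneg_left
      (Real.iSup_le (fun j => hi j (Finset.mem_univ j)) (abs_nonneg _)) hr

lemma ContinuousLinearMap.apply_eq_dotProduct (f : (Fin d → ℝ) →L[ℝ] ℝ) (y : Fin d → ℝ) :
    f y = (fun j => f (Pi.single j 1)) ⬝ᵥ y := by
  conv_lhs => rw [pi_eq_sum_univ' y]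
  simp [dotProduct, mul_comm]

end Norms

section Transpose

variable {n m : ℕ} (A : (Fin n → ℝ) →L[ℝ] (Fin m → ℝ))

lemma transposeApply_eq_vecMul (h : Fin m → ℝ) :
    transposeApply A h = Matrix.vecMul h (LinearMap.toMatrix' (A : (Fin n → ℝ) →ₗ[ℝ] _)) := by
  ext i; simp [transposeApply, Matrix.vecMul, dotProduct, mul_comm]

lemma transposeApply_dotProduct (h : Fin m → ℝ) (v : Fin n → ℝ) :
    transposeApply A h ⬝ᵥ v = h ⬝ᵥ A v := by
  rw [transposeApply_eq_vecMul, ← Matrix.dotProduct_mulVec, LinearMap.toMatrix'_mulVec]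
  rfl

theorem exists_apply_eq_l1Norm_le {μ : ℝ} (hμ : 0 < μ)
    (hA : ∀ h, μ * l1Norm h ≤ linfNorm (transposeApply A h)) (b : Fin m → ℝ) :
    ∃ v, A v = b ∧ l1Norm v ≤ linfNorm b / μ := by
  set r := linfNorm b / μ
  have hr : 0 ≤ r := div_nonneg (linfNorm_nonneg b) hμ.le
  by_contra hb
  have hbK : b ∉ A '' {v | l1Norm (v - 0) ≤ r} := by
    rintro ⟨v, hv, hAv⟩
    exact hb ⟨v, hAv, by simpa using hv⟩
  obtain ⟨f, c, hfK, hcf⟩ := geometric_hahn_banach_closed_point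
    ((convex_l1Ball 0 r).linear_image A.toLinearMap)
    ((isCompact_l1Ball 0 r).image A.continuous).isClosed hbK
  set h := fun j => f (Pi.single j 1)
  obtain ⟨v, hv, hrv⟩ := exists_l1Norm_le_mul_linfNorm_le_dotProduct (transposeApply A h) hr
  have hAv : f (A v) < c := hfK (A v) ⟨v, by simpa using hv, rfl⟩
  have hbv : f b ≤ f (A v) := calc
    f b = h ⬝ᵥ b := f.apply_eq_dotProduct b
    _ ≤ l1Norm h * linfNorm b := dotProduct_le_l1Norm_mul_linfNorm h b
    _ = r * (μ * l1Norm h) := by simp only [r]; field_simp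
    _ ≤ r * linfNorm (transposeApply A h) := mul_le_mul_of_nonneg_left (hA h) hr
    _ ≤ transposeApply A h ⬝ᵥ v := hrv
    _ = f (A v) := by rw [transposeApply_dotProduct, f.apply_eq_dotProduct]
  linarith

end Transpose

theorem norm_image_sub_sub_fderiv_le {E F : Type*} [NormedAddCommGroup E] [NormedSpace ℝ E]
    [NormedAddCommGroup F] [NormedSpace ℝ F] {f : E → F} (hf : Differentiable ℝ f) {a d : E}
    {C : ℝ} (hC : ∀ t ∈ Set.Ico (0 : ℝ) 1, ‖fderiv ℝ f (a + t • d) d - fderiv ℝ f a d‖ ≤ C * t) :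
    ‖f (a + d) - f a - fderiv ℝ f a d‖ ≤ C / 2 := by
  have hg : ∀ t : ℝ, HasDerivAt (fun t : ℝ => f (a + t • d) - f a - t • fderiv ℝ f a d)
      (fderiv ℝ f (a + t • d) d - fderiv ℝ f a d) t := by
    intro t
    have hline : HasDerivAt (fun t : ℝ => a + t • d) d t := by
      simpa using ((hasDerivAt_id t).smul_const d).const_add a
    exact (((hf _).hasFDerivAt.comp_hasDerivAt t hline).sub_const (f a)).sub
      (by simpa using (hasDerivAt_id t).smul_const (fderiv ℝ f a d))
  have hB : ∀ t : ℝ, HasDerivAt (fun t : ℝ => C / 2 * t ^ 2) (C * t) t := fun t =>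
    ((hasDerivAt_pow 2 t).const_mul (C / 2)).congr_deriv (by push_cast; ring)
  simpa using image_norm_le_of_norm_deriv_right_le_deriv_boundary
    (fun t _ => (hg t).continuousAt.continuousWithinAt) (fun t _ => (hg t).hasDerivWithinAt)
    (by simp) hB hC (Set.right_mem_Icc.2 zero_le_one)

noncomputable def dampedNewtonBound (g : ℝ) : ℝ := g - min g 1 + min g 1 ^ 2 / 2

lemma dampedNewtonBound_of_one_le {g : ℝ} (h : 1 ≤ g) : dampedNewtonBound g = g - 1 / 2 := by
  rw [dampedNewtonBound, min_eq_right h]; ring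

lemma dampedNewtonBound_of_le_one {g : ℝ} (h : g ≤ 1) : dampedNewtonBound g = g ^ 2 / 2 := by
  rw [dampedNewtonBound, min_eq_left h]; ring

lemma dampedNewtonBound_mono {a b : ℝ} (ha : 0 ≤ a) (hab : a ≤ b) :
    dampedNewtonBound a ≤ dampedNewtonBound b := by
  unfold dampedNewtonBound
  rcases le_total a 1 with h1 | h1 <;> rcases le_total b 1 with h2 | h2 <;>
    simp only [min_eq_left, min_eq_right, h1, h2] <;> nlinarith

section DampedNewton

variable {n m : ℕ} {P : (Fin n → ℝ) → (Fin m → ℝ)} {B : Set (Fin n → ℝ)} {μ L : ℝ}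

theorem linfNorm_image_sub_sub_fderiv_le (hP : Differentiable ℝ P) (hB : Convex ℝ B)
    (hLip : ∀ a ∈ B, ∀ b ∈ B, ∀ v : Fin n → ℝ,
      linfNorm ((fderiv ℝ P a - fderiv ℝ P b) v) ≤ L * l1Norm (a - b) * l1Norm v)
    {a b : Fin n → ℝ} (ha : a ∈ B) (hb : b ∈ B) :
    linfNorm (P b - P a - fderiv ℝ P a (b - a)) ≤ L / 2 * l1Norm (b - a) ^ 2 := by
  have key := norm_image_sub_sub_fderiv_le hP (a := a) (d := b - a)
    (C := L * l1Norm (b - a) ^ 2) fun t ht => by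
      have hmem : a + t • (b - a) ∈ B := hB.add_smul_sub_mem ha hb ⟨ht.1, ht.2.le⟩
      have := hLip _ hmem a ha (b - a)
      rw [add_sub_cancel_left, l1Norm_smul, abs_of_nonneg ht.1, sub_apply,
        linfNorm_eq_norm] at this
      linarith
  rw [add_sub_cancel] at key
  rw [linfNorm_eq_norm]
  linarith

lemma l1Norm_smul_le_of_mul_eq_min (hμ : 0 < μ) (hL : 0 < L) {y : Fin m → ℝ} {w : Fin n → ℝ}
    {t : ℝ} (hw : l1Norm w ≤ linfNorm y / μ) (ht0 : 0 ≤ t)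
    (ht : t * (L / μ ^ 2 * linfNorm y) = min (L / μ ^ 2 * linfNorm y) 1) :
    l1Norm (t • w) ≤ μ / L * min (L / μ ^ 2 * linfNorm y) 1 := by
  rw [l1Norm_smul, abs_of_nonneg ht0, ← ht]
  calc t * l1Norm w ≤ t * (linfNorm y / μ) := mul_le_mul_of_nonneg_left hw ht0
    _ = μ / L * (t * (L / μ ^ 2 * linfNorm y)) := by field_simp

theorem normalizedResidual_dampedStep_le (hP : Differentiable ℝ P) (hB : Convex ℝ B)
    (hLip : ∀ a ∈ B, ∀ b ∈ B, ∀ v : Fin n → ℝ,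
      linfNorm ((fderiv ℝ P a - fderiv ℝ P b) v) ≤ L * l1Norm (a - b) * l1Norm v)
    (hμ : 0 < μ) (hL : 0 < L) {u w : Fin n → ℝ} {t : ℝ} (hu : u ∈ B) (hu' : u - t • w ∈ B)
    (hw : fderiv ℝ P u w = P u) (hw_le : l1Norm w ≤ linfNorm (P u) / μ)
    (ht0 : 0 ≤ t) (ht1 : t ≤ 1)
    (ht : t * (L / μ ^ 2 * linfNorm (P u)) = min (L / μ ^ 2 * linfNorm (P u)) 1) :
    L / μ ^ 2 * linfNorm (P (u - t • w)) ≤ dampedNewtonBound (L / μ ^ 2 * linfNorm (P u)) := by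
  set g := L / μ ^ 2 * linfNorm (P u)
  have htaylor := linfNorm_image_sub_sub_fderiv_le hP hB hLip hu hu'
  rw [sub_sub_cancel_left, map_neg, map_smul, hw, l1Norm_neg] at htaylor
  have hsplit : P (u - t • w) = (P (u - t • w) - P u - -(t • P u)) + (1 - t) • P u := by module
  have hres : linfNorm (P (u - t • w))
      ≤ L / 2 * (μ / L * min g 1) ^ 2 + (1 - t) * linfNorm (P u) := calc
    linfNorm (P (u - t • w))
        ≤ linfNorm (P (u - t • w) - P u - -(t • P u)) + linfNorm ((1 - t) • P u) := by
      conv_lhs => rw [hsplit]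
      exact linfNorm_add_le _ _
    _ ≤ _ := by
      rw [linfNorm_smul, abs_of_nonneg (sub_nonneg.2 ht1)]
      gcongr
      exact htaylor.trans (by
        gcongr
        exacts [l1Norm_nonneg _, l1Norm_smul_le_of_mul_eq_min hμ hL hw_le ht0 ht])
  calc L / μ ^ 2 * linfNorm (P (u - t • w))
      ≤ L / μ ^ 2 * (L / 2 * (μ / L * min g 1) ^ 2 + (1 - t) * linfNorm (P u)) := by gcongr
    _ = g - t * g + min g 1 ^ 2 / 2 := by simp only [g]; field_simp; ring
    _ = dampedNewtonBound g := by rw [ht, dampedNewtonBound]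

theorem normalizedResidual_le_of_majorant (hP : Differentiable ℝ P) (hB : Convex ℝ B)
    {u0 : Fin n → ℝ} {ρ : ℝ} (hball : ∀ v, l1Norm (v - u0) ≤ ρ → v ∈ B)
    (hLip : ∀ a ∈ B, ∀ b ∈ B, ∀ v : Fin n → ℝ,
      linfNorm ((fderiv ℝ P a - fderiv ℝ P b) v) ≤ L * l1Norm (a - b) * l1Norm v)
    (hμ : 0 < μ) (hL : 0 < L) {u w : ℕ → Fin n → ℝ} {t φ : ℕ → ℝ} (hu0 : u 0 = u0)
    (hw : ∀ k, fderiv ℝ P (u k) (w k) = P (u k))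
    (hw_le : ∀ k, u k ∈ B → l1Norm (w k) ≤ linfNorm (P (u k)) / μ)
    (ht0 : ∀ k, 0 ≤ t k) (ht1 : ∀ k, t k ≤ 1)
    (ht : ∀ k, t k * (L / μ ^ 2 * linfNorm (P (u k))) = min (L / μ ^ 2 * linfNorm (P (u k))) 1)
    (hstep : ∀ k, u (k + 1) = u k - t k • w k)
    (hφ0 : L / μ ^ 2 * linfNorm (P u0) ≤ φ 0) (hφ : ∀ k, dampedNewtonBound (φ k) ≤ φ (k + 1))
    (hφρ : ∀ k, μ / L * ∑ j ∈ Finset.range k, min (φ j) 1 ≤ ρ) (k : ℕ) :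
    L / μ ^ 2 * linfNorm (P (u k)) ≤ φ k := by
  suffices h : ∀ k, l1Norm (u k - u0) ≤ μ / L * ∑ j ∈ Finset.range k, min (φ j) 1 ∧
      L / μ ^ 2 * linfNorm (P (u k)) ≤ φ k from (h k).2
  intro k
  induction k with
  | zero => simp [hu0, hφ0, l1Norm]
  | succ k ih =>
    obtain ⟨hdist, hres⟩ := ih
    have hk : u k ∈ B := hball _ (hdist.trans (hφρ k))
    have hdist' : l1Norm (u (k + 1) - u0) ≤ μ / L * ∑ j ∈ Finset.range (k + 1), min (φ j) 1 :=
      calc l1Norm (u (k + 1) - u0) = l1Norm ((u k - u0) - t k • w k) := by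
            rw [hstep]; congr 1; abel
        _ ≤ l1Norm (u k - u0) + l1Norm (t k • w k) := l1Norm_sub_le _ _
        _ ≤ μ / L * ∑ j ∈ Finset.range k, min (φ j) 1 + μ / L * min (φ k) 1 := by
            gcongr
            exact (l1Norm_smul_le_of_mul_eq_min hμ hL (hw_le k hk) (ht0 k) (ht k)).trans
              (by gcongr)
        _ = μ / L * ∑ j ∈ Finset.range (k + 1), min (φ j) 1 := by
            rw [Finset.sum_range_succ, mul_add]
    have hk1 : u (k + 1) ∈ B := hball _ (hdist'.trans (hφρ _))
    refine ⟨hdist', ?_⟩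
    rw [hstep] at hk1 ⊢
    calc _ ≤ dampedNewtonBound (L / μ ^ 2 * linfNorm (P (u k))) :=
          normalizedResidual_dampedStep_le hP hB hLip hμ hL hk hk1 (hw k) (hw_le k hk)
            (ht0 k) (ht1 k) (ht k)
      _ ≤ dampedNewtonBound (φ k) :=
          dampedNewtonBound_mono (mul_nonneg (by positivity) (linfNorm_nonneg _)) hres
      _ ≤ φ (k + 1) := hφ k

end DampedNewton

noncomputable def dampedStepSize (μ L : ℝ) {m : ℕ} (y : Fin m → ℝ) : ℝ :=
  if y = 0 then 1 else min 1 (μ ^ 2 / (L * linfNorm y))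

section StepSize

variable {m : ℕ} {μ L : ℝ} (y : Fin m → ℝ)

lemma dampedStepSize_nonneg (hL : 0 < L) : 0 ≤ dampedStepSize μ L y := by
  have := linfNorm_nonneg y
  unfold dampedStepSize
  split_ifs
  exacts [zero_le_one, le_min zero_le_one (by positivity)]

lemma dampedStepSize_le_one : dampedStepSize μ L y ≤ 1 := by
  unfold dampedStepSize
  split_ifs
  exacts [le_rfl, min_le_left _ _]

lemma dampedStepSize_of_ne_zero (hy : y ≠ 0) :
    dampedStepSize μ L y = min 1 (L / μ ^ 2 * linfNorm y)⁻¹ := by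
  simp [dampedStepSize, hy, div_eq_mul_inv, mul_comm, mul_left_comm, mul_assoc]

lemma dampedStepSize_mul (hμ : 0 < μ) (hL : 0 < L) :
    dampedStepSize μ L y * (L / μ ^ 2 * linfNorm y) = min (L / μ ^ 2 * linfNorm y) 1 := by
  by_cases hy : y = 0
  · simp [dampedStepSize, hy, linfNorm_eq_norm]
  have hg : 0 < L / μ ^ 2 * linfNorm y := by have := linfNorm_pos hy; positivity
  rw [dampedStepSize_of_ne_zero y hy, min_mul_of_nonneg _ _ hg.le, one_mul,
    inv_mul_cancel₀ hg.ne']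

lemma dampedStepSize_eq_one (hμ : 0 < μ) (hL : 0 < L) (h : L / μ ^ 2 * linfNorm y ≤ 1) :
    dampedStepSize μ L y = 1 := by
  by_cases hy : y = 0
  · simp [dampedStepSize, hy]
  have hg : 0 < L / μ ^ 2 * linfNorm y := by have := linfNorm_pos hy; positivity
  rw [dampedStepSize_of_ne_zero y hy]
  exact min_eq_left ((one_le_inv₀ hg).2 h)

end StepSize

lemma summable_pow_two_pow {δ : ℝ} (h0 : 0 ≤ δ) (h1 : δ < 1) :
    Summable fun ℓ : ℕ => δ ^ 2 ^ ℓ :=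
  (summable_geometric_of_lt_one h0 h1).of_nonneg_of_le (fun ℓ => by positivity)
    fun ℓ => pow_le_pow_of_le_one h0 h1.le Nat.lt_two_pow_self.le

-- For `x = Ls/μ²`, `dampedSteps x` is `k_max` and `x - dampedSteps x / 2` is `v̄`.
noncomputable def dampedSteps (x : ℝ) : ℕ := (⌈2 * x⌉ - 2).toNat

noncomputable def dampedNewtonMajorant (x : ℝ) (k : ℕ) : ℝ :=
  if k < dampedSteps x then x - k / 2
  else 2 * ((x - dampedSteps x / 2) / 2) ^ 2 ^ (k - dampedSteps x)

section Majorant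

variable {x : ℝ}

lemma sub_dampedSteps_le_one (x : ℝ) : x - dampedSteps x / 2 ≤ 1 := by
  have h1 : ⌈2 * x⌉ - 2 ≤ (dampedSteps x : ℤ) := Int.self_le_toNat _
  have h2 : 2 * x ≤ ⌈2 * x⌉ := Int.le_ceil _
  have h3 : ((⌈2 * x⌉ - 2 : ℤ) : ℝ) ≤ dampedSteps x := by exact_mod_cast h1
  push_cast at h3
  linarith

lemma half_le_sub_dampedSteps (h : dampedSteps x ≠ 0) : 1 / 2 ≤ x - dampedSteps x / 2 := by
  have h1 : (dampedSteps x : ℤ) = ⌈2 * x⌉ - 2 :=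
    Int.toNat_of_nonneg (by unfold dampedSteps at h; omega)
  have h2 : (⌈2 * x⌉ : ℝ) < 2 * x + 1 := Int.ceil_lt_add_one _
  have h3 : (dampedSteps x : ℝ) = ⌈2 * x⌉ - 2 := by exact_mod_cast h1
  linarith

lemma sub_dampedSteps_nonneg (hx : 0 ≤ x) : 0 ≤ x - dampedSteps x / 2 := by
  by_cases h : dampedSteps x = 0
  · simpa [h] using hx
  · linarith [half_le_sub_dampedSteps h]

lemma dampedNewtonMajorant_zero : dampedNewtonMajorant x 0 = x := by
  by_cases h : dampedSteps x = 0
  · simp [dampedNewtonMajorant, h]; ring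
  · simp [dampedNewtonMajorant, Nat.pos_of_ne_zero h]

lemma dampedNewtonMajorant_of_le {k : ℕ} (hk : dampedSteps x ≤ k) :
    dampedNewtonMajorant x k = 2 * ((x - dampedSteps x / 2) / 2) ^ 2 ^ (k - dampedSteps x) := by
  simp [dampedNewtonMajorant, hk]

lemma dampedNewtonMajorant_nonneg (hx : 0 ≤ x) (k : ℕ) : 0 ≤ dampedNewtonMajorant x k := by
  have := sub_dampedSteps_nonneg hx
  unfold dampedNewtonMajorant
  split_ifs with hk
  · have : (k : ℝ) + 1 ≤ dampedSteps x := by exact_mod_cast hk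
    linarith
  · positivity

lemma dampedNewtonMajorant_le_one (hx : 0 ≤ x) {k : ℕ} (hk : dampedSteps x ≤ k) :
    dampedNewtonMajorant x k ≤ 1 := by
  have h0 := sub_dampedSteps_nonneg hx
  have h1 := sub_dampedSteps_le_one x
  rw [dampedNewtonMajorant_of_le hk]
  have := pow_le_of_le_one (by positivity : 0 ≤ (x - dampedSteps x / 2) / 2) (by linarith)
    (pow_ne_zero (k - dampedSteps x) two_ne_zero)
  linarith

theorem dampedNewtonBound_dampedNewtonMajorant (hx : 0 ≤ x) (k : ℕ) :
    dampedNewtonBound (dampedNewtonMajorant x k) = dampedNewtonMajorant x (k + 1) := by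
  set K := dampedSteps x
  have hφk : k < K → dampedNewtonMajorant x k = x - k / 2 := fun h => if_pos h
  rcases lt_trichotomy (k + 1) K with hk | hk | hk
  · have : (k : ℝ) + 2 ≤ K := by exact_mod_cast hk
    rw [hφk (by omega), dampedNewtonBound_of_one_le (by linarith [sub_dampedSteps_nonneg hx]),
      dampedNewtonMajorant, if_pos hk]
    push_cast; ring
  · have hK : (K : ℝ) = k + 1 := by exact_mod_cast hk.symm
    have hv : 1 / 2 ≤ x - K / 2 := half_le_sub_dampedSteps (by omega)
    rw [hφk (by omega), dampedNewtonBound_of_one_le (by linarith),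
      dampedNewtonMajorant_of_le hk.ge, hk, Nat.sub_self, hK]
    ring
  · have hKk : K ≤ k := by omega
    rw [dampedNewtonBound_of_le_one (dampedNewtonMajorant_le_one hx hKk),
      dampedNewtonMajorant_of_le hKk, dampedNewtonMajorant_of_le hk.le, Nat.sub_add_comm hKk,
      pow_succ 2 (k - K), pow_mul]
    ring

lemma sum_min_dampedNewtonMajorant_le (hx : 0 ≤ x) (k : ℕ) :
    ∑ j ∈ Finset.range k, min (dampedNewtonMajorant x j) 1
      ≤ dampedSteps x + 2 * H0 ((x - dampedSteps x / 2) / 2) := by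
  set K := dampedSteps x
  set δ := (x - K / 2) / 2
  have hδ0 : 0 ≤ δ := by have := sub_dampedSteps_nonneg hx; positivity
  have hδ1 : δ < 1 := by have := sub_dampedSteps_le_one x; simp only [δ, K]; linarith
  calc ∑ j ∈ Finset.range k, min (dampedNewtonMajorant x j) 1
      ≤ ∑ j ∈ Finset.range (K + k), min (dampedNewtonMajorant x j) 1 :=
        Finset.sum_le_sum_of_subset_of_nonneg (Finset.range_mono (Nat.le_add_left k K))
          fun j _ _ => le_min (dampedNewtonMajorant_nonneg hx j) zero_le_one
    _ = ∑ j ∈ Finset.range K, min (dampedNewtonMajorant x j) 1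
        + ∑ ℓ ∈ Finset.range k, min (dampedNewtonMajorant x (K + ℓ)) 1 :=
        Finset.sum_range_add _ _ _
    _ ≤ ∑ j ∈ Finset.range K, 1 + ∑ ℓ ∈ Finset.range k, 2 * δ ^ 2 ^ ℓ := by
        gcongr with j _ ℓ _
        · exact min_le_right _ _
        · rw [dampedNewtonMajorant_of_le (Nat.le_add_right K ℓ), Nat.add_sub_cancel_left]
          exact min_le_left _ _
    _ ≤ K + 2 * H0 δ := by
        rw [← Finset.mul_sum, Finset.sum_const, Finset.card_range, nsmul_one]
        gcongr
        exact (summable_pow_two_pow hδ0 hδ1).sum_le_tsum _ fun _ _ => by positivity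

end Majorant

theorem statement10_general {n m : ℕ} (P : (Fin n → ℝ) → (Fin m → ℝ)) (hP : ContDiff ℝ 1 P)
    (u0 : Fin n → ℝ) (s : ℝ) (hs : s = linfNorm (P u0))
    (ρ : ℝ) (Bρ : Set (Fin n → ℝ)) (hB : Bρ = {v | l1Norm (v - u0) ≤ ρ})
    (μ : ℝ) (hμ : 0 < μ)
    (hA' : ∀ v ∈ Bρ, ∀ h : Fin m → ℝ,
      μ * l1Norm h ≤ linfNorm (transposeApply (fderiv ℝ P v) h))
    (L : ℝ) (hL : 0 < L)
    (hLip : ∀ a ∈ Bρ, ∀ b ∈ Bρ, ∀ v : Fin n → ℝ,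
      linfNorm ((fderiv ℝ P a - fderiv ℝ P b) v) ≤ L * l1Norm (a - b) * l1Norm v)
    (kmax : ℤ) (hkmax : kmax = max 0 (⌈2 * (L * s / μ ^ 2)⌉ - 2))
    (vbar : ℝ) (hvbar : vbar = L * s / μ ^ 2 - (kmax : ℝ) / 2)
    (hρbig : ρ ≥ μ / L * ((kmax : ℝ) + 2 * H0 (vbar / 2)))
    -- a damped sparse-Newton sequence from `u0`:
    (u w : ℕ → Fin n → ℝ) (γ : ℕ → ℝ) (hu0 : u 0 = u0)
    (hw_eq : ∀ k, fderiv ℝ P (u k) (w k) = P (u k))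
    (hw_min : ∀ k, ∀ v : Fin n → ℝ, fderiv ℝ P (u k) v = P (u k) →
      l1Norm (w k) ≤ l1Norm v)
    (hγ : ∀ k, γ k = if P (u k) = 0 then 1
      else min 1 (μ ^ 2 / (L * linfNorm (P (u k)))))
    (hstep : ∀ k, u (k + 1) = u k - γ k • w k) :
    ∀ k : ℕ, kmax ≤ (k : ℤ) → γ k = 1 := by
  subst hB hs hvbar
  set x := L * linfNorm (P u0) / μ ^ 2
  have hx : 0 ≤ x := div_nonneg (mul_nonneg hL.le (linfNorm_nonneg _)) (sq_nonneg μ)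
  obtain rfl : kmax = dampedSteps x := by rw [hkmax, dampedSteps, Int.ofNat_toNat, max_comm]
  push_cast at hρbig
  have hγ' : ∀ k, γ k = dampedStepSize μ L (P (u k)) := hγ
  have hw_le : ∀ k, u k ∈ {v | l1Norm (v - u0) ≤ ρ} →
      l1Norm (w k) ≤ linfNorm (P (u k)) / μ := fun k hk => by
    obtain ⟨v, hv, hvb⟩ := exists_apply_eq_l1Norm_le _ hμ (hA' _ hk) (P (u k))
    exact (hw_min k v hv).trans hvb
  have hres : ∀ k, L / μ ^ 2 * linfNorm (P (u k)) ≤ dampedNewtonMajorant x k :=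
    normalizedResidual_le_of_majorant (hP.differentiable one_ne_zero) (convex_l1Ball u0 ρ)
      (fun _ hv => hv) hLip hμ hL hu0 hw_eq hw_le
      (fun k => hγ' k ▸ dampedStepSize_nonneg _ hL) (fun k => hγ' k ▸ dampedStepSize_le_one _)
      (fun k => hγ' k ▸ dampedStepSize_mul _ hμ hL) hstep
      (by rw [dampedNewtonMajorant_zero, div_mul_eq_mul_div])
      (fun k => (dampedNewtonBound_dampedNewtonMajorant hx k).le)
      (fun k => (mul_le_mul_of_nonneg_left (sum_min_dampedNewtonMajorant_le hx k)
        (by positivity)).trans hρbig)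
  intro k hk
  rw [hγ']
  exact dampedStepSize_eq_one _ hμ hL
    ((hres k).trans (dampedNewtonMajorant_le_one hx (by exact_mod_cast hk)))

/-- bound on the number of damped iterations: for every damped
sparse-Newton sequence from `u⁰`, the step-size
`γ_k = min{1, μ²/(L‖P(uᵏ)‖_∞)}` equals `1` for all `k ≥ k_max`, where
`k_max = max{0, ⌈2Ls/μ²⌉ − 2}`. -/
theorem statement10 {n m : ℕ} (P : (Fin n → ℝ) → (Fin m → ℝ)) (hP : ContDiff ℝ 1 P)
    (u0 : Fin n → ℝ) (s : ℝ) (hs : s = linfNorm (P u0)) (hspos : 0 < s)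
    (ρ : ℝ) (hρ : 0 < ρ) (Bρ : Set (Fin n → ℝ)) (hB : Bρ = {v | l1Norm (v - u0) ≤ ρ})
    (μ : ℝ) (hμ : 0 < μ)
    (hA' : ∀ v ∈ Bρ, ∀ h : Fin m → ℝ,
      μ * l1Norm h ≤ linfNorm (transposeApply (fderiv ℝ P v) h))
    (L : ℝ) (hL : 0 < L)
    (hLip : ∀ a ∈ Bρ, ∀ b ∈ Bρ, ∀ v : Fin n → ℝ,
      linfNorm ((fderiv ℝ P a - fderiv ℝ P b) v) ≤ L * l1Norm (a - b) * l1Norm v)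
    (kmax : ℤ) (hkmax : kmax = max 0 (⌈2 * (L * s / μ ^ 2)⌉ - 2))
    (vbar : ℝ) (hvbar : vbar = L * s / μ ^ 2 - (kmax : ℝ) / 2)
    (hρbig : ρ ≥ μ / L * ((kmax : ℝ) + 2 * H0 (vbar / 2)))
    -- a damped sparse-Newton sequence from `u0`:
    (u w : ℕ → Fin n → ℝ) (γ : ℕ → ℝ) (hu0 : u 0 = u0)
    (hw_eq : ∀ k, fderiv ℝ P (u k) (w k) = P (u k))
    (hw_min : ∀ k, ∀ v : Fin n → ℝ, fderiv ℝ P (u k) v = P (u k) →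
      l1Norm (w k) ≤ l1Norm v)
    (hγ : ∀ k, γ k = if P (u k) = 0 then 1
      else min 1 (μ ^ 2 / (L * linfNorm (P (u k)))))
    (hstep : ∀ k, u (k + 1) = u k - γ k • w k) :
    ∀ k : ℕ, kmax ≤ (k : ℤ) → γ k = 1 :=
  statement10_general P hP u0 s hs ρ Bρ hB μ hμ hA' L hL hLip kmax hkmax vbar hvbar hρbig u w γ hu0
    hw_eq hw_min hγ hstep
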